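/- arXiv:2409.17078 — 2 statements merged into one kernel-verified Lean document; each statement's English description precedes it below -/
import Mathlib

section
/- Let R, B ⊂ ℝ² be finite disjoint sets with R ∪ B in general position, and let C ⊆ ℝ² be a convex region. Then the number of empty red-red-blue triangles whose three vertices all lie in C is at least |B ∩ C| · (|R ∩ C| − |B ∩ C|). -/
/-!
Fix a blue point `q ∈ C` and order the other points of `(R ∪ B) ∩ C` by their angle around `q`.
Consecutive points `x`, `x'` in this cyclic order span a wedge at `q` with no point in its
interior, so when the wedge is narrower than `π` the triangle `x x' q` contains no further point of
`(R ∪ B) ∩ C`, and by convexity of `C` no further point of `R ∪ B` at all. At most one wedge is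
`π` or wider, and at most `|B ∩ C| - 1` wedges starting at a red point end at a blue one, so
`q` is the apex of at least `|R ∩ C| - |B ∩ C|` empty red-red-blue triangles. Each such triangle
has a single blue vertex, so summing over the blue points of `C` counts no triangle twice.
-/

/-- No three distinct points of `S` are collinear. -/
def GenPos (S : Set ℂ) : Prop :=
  ∀ p ∈ S, ∀ q ∈ S, ∀ r ∈ S, p ≠ q → p ≠ r → q ≠ r → ¬ Collinear ℝ ({p, q, r} : Set ℂ)

/-- The collection of empty red-red-blue triangles: vertex sets `{a, b, c}` with
`a, b ∈ R` distinct, `c ∈ B`, whose convex hull contains no other point of `R ∪ B`. -/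
def emptyRRB (R B : Finset ℂ) : Set (Set ℂ) :=
  {T | ∃ a b c : ℂ, a ∈ R ∧ b ∈ R ∧ c ∈ B ∧ a ≠ b ∧ T = {a, b, c} ∧
    convexHull ℝ {a, b, c} ∩ (↑R ∪ ↑B : Set ℂ) = ({a, b, c} : Set ℂ)}

open Real EuclideanGeometry Module

namespace Real.Angle

noncomputable def toRealIco (θ : Angle) : ℝ := toIcoMod two_pi_pos 0 θ.toReal

@[simp]
theorem coe_toRealIco (θ : Angle) : (θ.toRealIco : Angle) = θ := by
  simp [toRealIco]

theorem toRealIco_nonneg (θ : Angle) : 0 ≤ θ.toRealIco :=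
  (toIcoMod_mem_Ico' two_pi_pos _).1

theorem toRealIco_lt_two_pi (θ : Angle) : θ.toRealIco < 2 * π :=
  (toIcoMod_mem_Ico' two_pi_pos _).2

theorem toRealIco_pos {θ : Angle} (h : θ ≠ 0) : 0 < θ.toRealIco := by
  refine (toRealIco_nonneg θ).lt_of_ne fun h0 => h ?_
  rw [← coe_toRealIco θ, ← h0, coe_zero]

@[simp]
theorem toRealIco_zero : (0 : Angle).toRealIco = 0 := by
  simp [toRealIco]

theorem toRealIco_coe (t : ℝ) : (t : Angle).toRealIco = toIcoMod two_pi_pos 0 t := by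
  rw [toRealIco, toReal_coe, toIcoMod_toIocMod]

theorem toRealIco_add (θ ψ : Angle) :
    (θ + ψ).toRealIco = θ.toRealIco + ψ.toRealIco ∨
      (θ + ψ).toRealIco + 2 * π = θ.toRealIco + ψ.toRealIco := by
  have h := toRealIco_coe (θ.toRealIco + ψ.toRealIco)
  rw [coe_add, coe_toRealIco, coe_toRealIco] at h
  have := toRealIco_nonneg θ
  have := toRealIco_nonneg ψ
  have := toRealIco_lt_two_pi θ
  have := toRealIco_lt_two_pi ψ
  rcases lt_or_ge (θ.toRealIco + ψ.toRealIco) (2 * π) with hlt | hge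
  · left
    rw [h, toIcoMod_eq_self]
    constructor <;> linarith
  · right
    rw [h, ← toIcoMod_sub, (toIcoMod_eq_self _).2 ⟨by linarith, by linarith⟩]
    ring

theorem toRealIco_add_toRealIco_neg {θ : Angle} (h : θ ≠ 0) :
    θ.toRealIco + (-θ).toRealIco = 2 * π := by
  have hθ := toRealIco_pos h
  have hneg := toRealIco_nonneg (-θ)
  rcases toRealIco_add θ (-θ) with h0 | h2π <;>
    simp only [add_neg_cancel, toRealIco_zero] at * <;> linarith

theorem sign_eq_one_iff_toRealIco {θ : Angle} :
    θ.sign = 1 ↔ 0 < θ.toRealIco ∧ θ.toRealIco < π := by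
  have hsin : sin θ = Real.sin θ.toRealIco := by rw [← sin_coe, coe_toRealIco]
  rw [sign, hsin, sign_eq_one_iff]
  constructor
  · intro hsin
    refine ⟨(toRealIco_nonneg θ).lt_of_ne fun h0 => by simp [← h0] at hsin, ?_⟩
    by_contra! hπ
    have := sin_nonpos_of_nonpos_of_neg_pi_le (x := θ.toRealIco - 2 * π)
      (by linarith [toRealIco_lt_two_pi θ]) (by linarith)
    rw [sin_sub_two_pi] at this
    linarith
  · exact fun h => sin_pos_of_pos_of_lt_pi h.1 h.2

end Real.Angle

theorem exists_sub_eq_smul_add_smul_of_mem_convexHull {E : Type*} [AddCommGroup E] [Module ℝ E]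
    {x y q z : E} (hz : z ∈ convexHull ℝ {x, y, q}) :
    ∃ β γ : ℝ, 0 ≤ β ∧ 0 ≤ γ ∧ z - q = β • (x - q) + γ • (y - q) := by
  refine convexHull_min (t := {z | ∃ β γ : ℝ, 0 ≤ β ∧ 0 ≤ γ ∧ z - q = β • (x - q) + γ • (y - q)})
    ?_ ?_ hz
  · rintro p (rfl | rfl | rfl)
    · exact ⟨1, 0, by simp⟩
    · exact ⟨0, 1, by simp⟩
    · exact ⟨0, 0, by simp⟩
  · rintro a ⟨β₁, γ₁, hβ₁, hγ₁, ha⟩ b ⟨β₂, γ₂, hβ₂, hγ₂, hb⟩ s t hs ht hst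
    refine ⟨s * β₁ + t * β₂, s * γ₁ + t * γ₂, by positivity, by positivity, ?_⟩
    linear_combination (norm := module) s • ha + t • hb + hst • q

namespace EuclideanGeometry

variable {V : Type*} [NormedAddCommGroup V] [InnerProductSpace ℝ V] [Fact (finrank ℝ V = 2)]
  [Module.Oriented ℝ V (Fin 2)]

theorem oangle_sign_eq_of_mem_convexHull {x y q z : V} (hz : z ∈ convexHull ℝ {x, y, q})
    (hxz : ¬Collinear ℝ {x, q, z}) (hzy : ¬Collinear ℝ {z, q, y}) :
    (∡ x q z).sign = (∡ x q y).sign ∧ (∡ z q y).sign = (∡ x q y).sign := by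
  obtain ⟨β, γ, hβ, hγ, hzq⟩ := exists_sub_eq_smul_add_smul_of_mem_convexHull hz
  rw [← oangle_sign_eq_zero_iff_collinear] at hxz hzy
  have hxz' : (∡ x q z).sign = SignType.sign γ * (∡ x q y).sign := by
    rw [oangle, vsub_eq_sub, vsub_eq_sub, hzq, o.oangle_sign_smul_add_smul_right]; rfl
  have hzy' : (∡ z q y).sign = SignType.sign β * (∡ x q y).sign := by
    rw [oangle, vsub_eq_sub, vsub_eq_sub, hzq, o.oangle_sign_smul_add_smul_left]; rfl
  have hβ' : 0 < β := hβ.lt_of_ne fun h => hzy (by rw [hzy', ← h, _root_.sign_zero, zero_mul])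
  have hγ' : 0 < γ := hγ.lt_of_ne fun h => hxz (by rw [hxz', ← h, _root_.sign_zero, zero_mul])
  rw [hxz', hzy', sign_pos hβ', sign_pos hγ', one_mul]
  exact ⟨rfl, rfl⟩

variable {q : V}

theorem toRealIco_oangle_add_toRealIco_oangle_rev {x y : V} (h : ¬Collinear ℝ {x, q, y}) :
    (∡ x q y).toRealIco + (∡ y q x).toRealIco = 2 * π := by
  rw [oangle_rev x q y]
  exact Real.Angle.toRealIco_add_toRealIco_neg (oangle_ne_zero_and_ne_pi_iff_not_collinear.2 h).1

theorem toRealIco_oangle_pos {x y : V} (h : ¬Collinear ℝ {x, q, y}) :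
    0 < (∡ x q y).toRealIco :=
  Real.Angle.toRealIco_pos (oangle_ne_zero_and_ne_pi_iff_not_collinear.2 h).1

theorem toRealIco_oangle_add {x y z : V} (hx : x ≠ q) (hy : y ≠ q) (hz : z ≠ q) :
    (∡ x q z).toRealIco = (∡ x q y).toRealIco + (∡ y q z).toRealIco ∨
      (∡ x q z).toRealIco + 2 * π = (∡ x q y).toRealIco + (∡ y q z).toRealIco := by
  rw [← oangle_add hx hy hz]
  exact Real.Angle.toRealIco_add _ _

theorem toRealIco_oangle_lt_of_mem_convexHull {x y z : V} (hxy : ¬Collinear ℝ {x, q, y})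
    (hπ : (∡ x q y).toRealIco < π) (hz : z ∈ convexHull ℝ {x, y, q})
    (hxz : ¬Collinear ℝ {x, q, z}) (hzy : ¬Collinear ℝ {z, q, y}) :
    (∡ x q z).toRealIco < (∡ x q y).toRealIco := by
  have hsign : (∡ x q y).sign = 1 := Real.Angle.sign_eq_one_iff_toRealIco.2
    ⟨toRealIco_oangle_pos hxy, hπ⟩
  obtain ⟨hxz', hzy'⟩ := oangle_sign_eq_of_mem_convexHull hz hxz hzy
  rw [hsign, Real.Angle.sign_eq_one_iff_toRealIco] at hxz' hzy'
  have hzq : z ≠ q := fun h => hxz (by simp [h, collinear_pair])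
  rcases toRealIco_oangle_add (y := z) (ne₁₂_of_not_collinear hxy) hzq
    (ne₂₃_of_not_collinear hzy).symm with h | h <;>
    linarith [(∡ x q y).toRealIco_nonneg]

variable (q) (P : Finset V)

-- `(∡ x q y).toRealIco` is the counterclockwise angle in `[0, 2π)` from the ray `q x` to `q y`.
def IsAngularSucc (s : V → V) : Prop :=
  ∀ x ∈ P, s x ∈ P ∧ s x ≠ x ∧ ∀ y ∈ P, y ≠ x → (∡ x q (s x)).toRealIco ≤ (∡ x q y).toRealIco

theorem exists_isAngularSucc (hP : 1 < P.card) : ∃ s, IsAngularSucc q P s := by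
  classical
  have : ∀ x ∈ P, ∃ y ∈ P.erase x, ∀ z ∈ P.erase x,
      (∡ x q y).toRealIco ≤ (∡ x q z).toRealIco := fun x hx =>
    (P.erase x).exists_min_image _ (by rw [← Finset.card_pos, Finset.card_erase_of_mem hx]; omega)
  choose! s hs using this
  refine ⟨s, fun x hx => ?_⟩
  obtain ⟨hsx, hmin⟩ := hs x hx
  exact ⟨Finset.mem_of_mem_erase hsx, Finset.ne_of_mem_erase hsx,
    fun y hy hyx => hmin y (Finset.mem_erase.2 ⟨hyx, hy⟩)⟩

variable {q P} {s : V → V}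

namespace IsAngularSucc

variable (hs : IsAngularSucc q P s) (hP : ∀ x ∈ P, ∀ y ∈ P, x ≠ y → ¬Collinear ℝ {x, q, y})
include hs hP

theorem injOn : Set.InjOn s P := by
  intro x₁ hx₁ x₂ hx₂ h
  by_contra hne
  obtain ⟨hy, hyx₁, hmin₁⟩ := hs x₁ hx₁
  obtain ⟨-, hyx₂, hmin₂⟩ := hs x₂ hx₂
  rw [← h] at hyx₂ hmin₂
  have h₁ := hmin₁ x₂ hx₂ (Ne.symm hne)
  have h₂ := hmin₂ x₁ hx₁ hne
  have hsum := toRealIco_oangle_add_toRealIco_oangle_rev (hP x₁ hx₁ x₂ hx₂ hne)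
  have hpos₁ := toRealIco_oangle_pos (hP x₁ hx₁ _ hy hyx₁.symm)
  have hpos₂ := toRealIco_oangle_pos (hP x₂ hx₂ _ hy hyx₂.symm)
  have hx₁q := ne₁₂_of_not_collinear (hP x₁ hx₁ x₂ hx₂ hne)
  have hx₂q := (ne₂₃_of_not_collinear (hP x₁ hx₁ x₂ hx₂ hne)).symm
  have hyq := (ne₂₃_of_not_collinear (hP x₂ hx₂ _ hy hyx₂.symm)).symm
  rcases toRealIco_oangle_add hx₁q hx₂q hyq with h | h <;> linarith

theorem card_filter_pi_le_toRealIco_le_one :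
    (P.filter fun x => π ≤ (∡ x q (s x)).toRealIco).card ≤ 1 := by
  refine Finset.card_le_one.2 fun x₁ h₁ x₂ h₂ => ?_
  rw [Finset.mem_filter] at h₁ h₂
  by_contra hne
  have hcol := hP x₁ h₁.1 x₂ h₂.1 hne
  have hsum := toRealIco_oangle_add_toRealIco_oangle_rev hcol
  have hle₁ := (hs x₁ h₁.1).2.2 x₂ h₂.1 (Ne.symm hne)
  have hle₂ := (hs x₂ h₂.1).2.2 x₁ h₁.1 hne
  have hπ : ∡ x₁ q x₂ = π := by
    rw [← Real.Angle.coe_toRealIco (∡ x₁ q x₂), show (∡ x₁ q x₂).toRealIco = π by linarith]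
  exact (oangle_ne_zero_and_ne_pi_iff_not_collinear.2 hcol).2 hπ

theorem notMem_convexHull {x z : V} (hx : x ∈ P) (hπ : (∡ x q (s x)).toRealIco < π) (hz : z ∈ P)
    (hzx : z ≠ x) (hzs : z ≠ s x) : z ∉ convexHull ℝ {x, s x, q} := fun hhull => by
  obtain ⟨hsx, hsxx, hmin⟩ := hs x hx
  exact (hmin z hz hzx).not_gt (toRealIco_oangle_lt_of_mem_convexHull (hP x hx _ hsx hsxx.symm)
    hπ hhull (hP x hx z hz hzx.symm) (hP z hz _ hsx hzs))

theorem convexHull_inter_insert_eq {x : V} (hx : x ∈ P) (hπ : (∡ x q (s x)).toRealIco < π) :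
    convexHull ℝ {x, s x, q} ∩ insert q (P : Set V) = {x, s x, q} := by
  refine Set.Subset.antisymm ?_ (Set.subset_inter (subset_convexHull ℝ _) ?_)
  · rintro z ⟨hhull, rfl | hz⟩
    · simp
    · by_contra hzT
      simp only [Set.mem_insert_iff, Set.mem_singleton_iff, not_or] at hzT
      exact hs.notMem_convexHull hP hx hπ hz hzT.1 hzT.2.1 hhull
  · rintro z (rfl | rfl | rfl)
    · exact Or.inr hx
    · exact Or.inr (hs _ hx).1
    · exact Or.inl rfl

-- Equal triangles force `x` and `x'` to be each other's successors, so their gaps sum to `2π`.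
theorem injOn_triangle :
    Set.InjOn (fun x => ({x, s x, q} : Set V)) {x ∈ P | (∡ x q (s x)).toRealIco < π} := by
  rintro x ⟨hx, hπ⟩ x' ⟨hx', hπ'⟩ h
  replace h : ({x, s x, q} : Set V) = {x', s x', q} := h
  by_contra hne
  have hxq := ne₁₂_of_not_collinear (hP x hx _ (hs x hx).1 (hs x hx).2.1.symm)
  have hx'q := ne₁₂_of_not_collinear (hP x' hx' _ (hs x' hx').1 (hs x' hx').2.1.symm)
  have hmem : x ∈ ({x', s x', q} : Set V) := h ▸ Or.inl rfl
  have hmem' : x' ∈ ({x, s x, q} : Set V) := h ▸ Or.inl rfl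
  simp only [Set.mem_insert_iff, Set.mem_singleton_iff, hne, hxq, hx'q, Ne.symm hne,
    false_or, or_false] at hmem hmem'
  have hsum := toRealIco_oangle_add_toRealIco_oangle_rev (hP x hx x' hx' hne)
  rw [← hmem'] at hπ
  rw [← hmem] at hπ'
  linarith [pi_pos]

theorem card_le_card_filter_add_card_sdiff_add_one [DecidableEq V] {A : Finset V} (hAP : A ⊆ P) :
    A.card ≤ (A.filter fun x => s x ∈ A ∧ (∡ x q (s x)).toRealIco < π).card + (P \ A).card + 1 := by
  set G := A.filter fun x => s x ∈ A ∧ (∡ x q (s x)).toRealIco < π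
  set L := A.filter fun x => s x ∉ A
  set W := P.filter fun x => π ≤ (∡ x q (s x)).toRealIco
  have hcover : A ⊆ G ∪ L ∪ W := by
    intro x hx
    simp only [G, L, W, Finset.mem_union, Finset.mem_filter]
    by_cases hsx : s x ∈ A <;> by_cases hπ : (∡ x q (s x)).toRealIco < π <;>
      simp_all [le_of_not_gt, hAP hx]
  have hL : L.card ≤ (P \ A).card :=
    Finset.card_le_card_of_injOn s
      (fun x hx => Finset.mem_sdiff.2 ⟨(hs x (hAP (Finset.mem_filter.1 hx).1)).1,
        (Finset.mem_filter.1 hx).2⟩)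
      (hs.injOn hP |>.mono fun x hx => hAP (Finset.mem_filter.1 hx).1)
  calc A.card ≤ (G ∪ L ∪ W).card := Finset.card_le_card hcover
    _ ≤ G.card + L.card + W.card :=
      (Finset.card_union_le _ _).trans (add_le_add_left (Finset.card_union_le _ _) _)
    _ ≤ G.card + (P \ A).card + 1 :=
      add_le_add (add_le_add_right hL _) (hs.card_filter_pi_le_toRealIco_le_one hP)

theorem convexHull_inter_eq {S C : Set V} (hC : Convex ℝ C) (hSC : S ∩ C = insert q ↑P) {x : V}
    (hx : x ∈ P) (hπ : (∡ x q (s x)).toRealIco < π) :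
    convexHull ℝ {x, s x, q} ∩ S = {x, s x, q} := by
  have hT : ({x, s x, q} : Set V) ⊆ S ∩ C := by
    rw [hSC, ← hs.convexHull_inter_insert_eq hP hx hπ]
    exact Set.inter_subset_right
  have hhullC : convexHull ℝ {x, s x, q} ⊆ C := convexHull_min (hT.trans Set.inter_subset_right) hC
  conv_rhs => rw [← hs.convexHull_inter_insert_eq hP hx hπ, ← hSC]
  rw [← Set.inter_assoc, Set.inter_eq_left.2 (Set.inter_subset_left.trans hhullC)]

end IsAngularSucc

end EuclideanGeometry

theorem Finset.card_filter_mem_eq_ncard {α : Type*} (s : Finset α) (C : Set α)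
    [DecidablePred (· ∈ C)] : (s.filter (· ∈ C)).card = (↑s ∩ C : Set α).ncard := by
  rw [← Set.ncard_coe_finset, Finset.coe_filter]
  rfl

theorem sum_ncard_sep_mem_le_ncard {α : Type*} {E : Set (Set α)} (hE : E.Finite) (A : Finset α)
    (h : ∀ T ∈ E, ∀ a ∈ A, ∀ b ∈ A, a ∈ T → b ∈ T → a = b) :
    ∑ a ∈ A, {T ∈ E | a ∈ T}.ncard ≤ E.ncard := by
  classical
  have hsep : ∀ a, {T ∈ E | a ∈ T}.ncard = (hE.toFinset.filter (a ∈ ·)).card := fun a => by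
    rw [← Set.ncard_coe_finset]; congr 1; ext; simp
  simp_rw [hsep]
  rw [Set.ncard_eq_toFinset_card _ hE, ← Finset.card_biUnion]
  · exact Finset.card_le_card (Finset.biUnion_subset.2 fun a _ => Finset.filter_subset _ _)
  · intro a ha b hb hab
    refine Finset.disjoint_filter.2 fun T hT haT hbT => hab (h T ?_ a ha b hb haT hbT)
    simpa using hT

section RedBlue

attribute [local instance] Complex.finrank_real_complex_fact

-- Any orientation of the plane will do.
noncomputable local instance : Module.Oriented ℝ ℂ (Fin 2) := ⟨Complex.orientation⟩

theorem emptyRRB_finite (R B : Finset ℂ) : (emptyRRB R B).Finite :=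
  ((R.finite_toSet.prod (R.finite_toSet.prod B.finite_toSet)).image
    fun p : ℂ × ℂ × ℂ => ({p.1, p.2.1, p.2.2} : Set ℂ)).subset
    fun _ ⟨a, b, c, ha, hb, hc, _, hT, _⟩ => ⟨(a, b, c), ⟨ha, hb, hc⟩, hT.symm⟩

theorem eq_of_mem_emptyRRB {R B : Finset ℂ} (hdisj : Disjoint R B) {T : Set ℂ}
    (hT : T ∈ emptyRRB R B) {b b' : ℂ} (hb : b ∈ B) (hb' : b' ∈ B) (hbT : b ∈ T) (hb'T : b' ∈ T) :
    b = b' := by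
  obtain ⟨x, y, c, hx, hy, -, -, rfl, -⟩ := hT
  have hnot : ∀ z ∈ B, z ≠ x ∧ z ≠ y := fun z hz =>
    ⟨fun h => Finset.disjoint_left.1 hdisj (h ▸ hx) hz,
      fun h => Finset.disjoint_left.1 hdisj (h ▸ hy) hz⟩
  simp only [Set.mem_insert_iff, Set.mem_singleton_iff, (hnot b hb).1, (hnot b hb).2,
    (hnot b' hb').1, (hnot b' hb').2, false_or] at hbT hb'T
  rw [hbT, hb'T]

theorem EuclideanGeometry.IsAngularSucc.card_filter_le_ncard_emptyRRB {R B : Finset ℂ}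
    {C : Set ℂ} (hC : Convex ℝ C) {q : ℂ} (hqB : q ∈ B) {P : Finset ℂ} {s : ℂ → ℂ}
    (hs : IsAngularSucc q P s) (hP : ∀ x ∈ P, ∀ y ∈ P, x ≠ y → ¬Collinear ℝ {x, q, y})
    (hRBC : (↑R ∪ ↑B : Set ℂ) ∩ C = insert q ↑P) {A : Finset ℂ} (hAR : A ⊆ R) (hAP : A ⊆ P) :
    (A.filter fun x => s x ∈ A ∧ (∡ x q (s x)).toRealIco < π).card ≤
      {T ∈ emptyRRB R B | T ⊆ C ∧ q ∈ T}.ncard := by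
  rw [← Set.ncard_coe_finset]
  refine Set.ncard_le_ncard_of_injOn _ (fun x hx => ?_)
    ((hs.injOn_triangle hP).mono fun x hx => ?_) ((emptyRRB_finite R B).subset fun _ hT => hT.1)
  · obtain ⟨hxA, hsxA, hπ⟩ := Finset.mem_filter.1 (Finset.mem_coe.1 hx)
    have hTC : ({x, s x, q} : Set ℂ) ⊆ C := by
      refine subset_trans ?_ (hRBC ▸ Set.inter_subset_right : insert q (P : Set ℂ) ⊆ C)
      rintro z (rfl | rfl | rfl)
      exacts [Or.inr (hAP hxA), Or.inr (hAP hsxA), Or.inl rfl]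
    exact ⟨⟨x, s x, q, hAR hxA, hAR hsxA, hqB, (hs x (hAP hxA)).2.1.symm, rfl,
      hs.convexHull_inter_eq hP hC hRBC (hAP hxA) hπ⟩, hTC, by simp⟩
  · obtain ⟨hxA, -, hπ⟩ := Finset.mem_filter.1 (Finset.mem_coe.1 hx)
    exact ⟨hAP hxA, hπ⟩

theorem ncard_inter_le_ncard_emptyRRB_mem_add {R B : Finset ℂ} (hdisj : Disjoint R B)
    (hgp : GenPos (↑R ∪ ↑B)) {C : Set ℂ} (hC : Convex ℝ C) {q : ℂ} (hqB : q ∈ B) (hqC : q ∈ C) :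
    (↑R ∩ C : Set ℂ).ncard ≤ {T ∈ emptyRRB R B | T ⊆ C ∧ q ∈ T}.ncard + (↑B ∩ C : Set ℂ).ncard := by
  classical
  rw [← Finset.card_filter_mem_eq_ncard, ← Finset.card_filter_mem_eq_ncard,
    ← Finset.card_erase_add_one (Finset.mem_filter.2 ⟨hqB, hqC⟩)]
  set A := R.filter (· ∈ C)
  set P := ((R ∪ B).filter (· ∈ C)).erase q
  have hmemP : ∀ z, z ∈ P ↔ z ≠ q ∧ (z ∈ R ∨ z ∈ B) ∧ z ∈ C := fun z => by simp [P]
  have hqR : q ∉ R := Finset.disjoint_right.1 hdisj hqB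
  have hAP : A ⊆ P := fun x hx => by
    rw [Finset.mem_filter] at hx
    exact (hmemP x).2 ⟨fun h => hqR (h ▸ hx.1), Or.inl hx.1, hx.2⟩
  have hPA : P \ A = (B.filter (· ∈ C)).erase q := by
    ext z
    have : z ∈ B → z ∉ R := fun h => Finset.disjoint_right.1 hdisj h
    simp only [Finset.mem_sdiff, hmemP, A, Finset.mem_erase, Finset.mem_filter]
    tauto
  have hRBC : (↑R ∪ ↑B : Set ℂ) ∩ C = insert q ↑P := by
    ext z
    simp only [Set.mem_inter_iff, Set.mem_union, Finset.mem_coe, Set.mem_insert_iff, hmemP]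
    by_cases hzq : z = q <;> simp [hzq, hqB, hqC]
  have hP : ∀ x ∈ P, ∀ y ∈ P, x ≠ y → ¬Collinear ℝ {x, q, y} := fun x hx y hy hxy => by
    rw [hmemP] at hx hy
    exact hgp x hx.2.1 q (Or.inr hqB) y hy.2.1 hx.1 hxy (Ne.symm hy.1)
  rw [← hPA]
  rcases le_or_gt A.card 1 with h1 | h1
  · omega
  obtain ⟨s, hs⟩ := exists_isAngularSucc q P (h1.trans_le (Finset.card_le_card hAP))
  have := hs.card_le_card_filter_add_card_sdiff_add_one hP hAP
  have := hs.card_filter_le_ncard_emptyRRB hC hqB hP hRBC (A := A) (Finset.filter_subset _ _) hAP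
  omega

end RedBlue

/-- The number of empty red-red-blue triangles inside a convex region `C` is at least
`|B ∩ C| · (|R ∩ C| − |B ∩ C|)`. -/
theorem stmt_2 (R B : Finset ℂ) (hdisj : Disjoint R B) (hgp : GenPos (↑R ∪ ↑B))
    (C : Set ℂ) (hC : Convex ℝ C) :
    ((↑B ∩ C : Set ℂ).ncard : ℤ) * (((↑R ∩ C : Set ℂ).ncard : ℤ) - ((↑B ∩ C : Set ℂ).ncard : ℤ))
      ≤ ({T ∈ emptyRRB R B | T ⊆ C}.ncard : ℤ) := by
  classical
  set E := {T ∈ emptyRRB R B | T ⊆ C}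
  have hE : E.Finite := (emptyRRB_finite R B).subset fun _ hT => hT.1
  have hapex : ∀ q ∈ B.filter (· ∈ C),
      ((↑R ∩ C : Set ℂ).ncard : ℤ) - (↑B ∩ C : Set ℂ).ncard ≤ ({T ∈ E | q ∈ T}.ncard : ℤ) :=
    fun q hq => by
      have := ncard_inter_le_ncard_emptyRRB_mem_add hdisj hgp hC (Finset.mem_filter.1 hq).1
        (Finset.mem_filter.1 hq).2
      rw [show {T ∈ E | q ∈ T} = {T ∈ emptyRRB R B | T ⊆ C ∧ q ∈ T} from
        Set.ext fun _ => and_assoc]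
      omega
  have hsum := sum_ncard_sep_mem_le_ncard hE (B.filter (· ∈ C)) fun T (hT : T ∈ E) a ha b hb =>
    eq_of_mem_emptyRRB hdisj hT.1 (Finset.mem_filter.1 ha).1 (Finset.mem_filter.1 hb).1
  calc ((↑B ∩ C : Set ℂ).ncard : ℤ) * (((↑R ∩ C : Set ℂ).ncard : ℤ) - (↑B ∩ C : Set ℂ).ncard)
      = ∑ _q ∈ B.filter (· ∈ C), (((↑R ∩ C : Set ℂ).ncard : ℤ) - (↑B ∩ C : Set ℂ).ncard) := by
        rw [Finset.sum_const, Finset.card_filter_mem_eq_ncard, nsmul_eq_mul]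
    _ ≤ ∑ q ∈ B.filter (· ∈ C), ({T ∈ E | q ∈ T}.ncard : ℤ) := Finset.sum_le_sum hapex
    _ ≤ E.ncard := by exact_mod_cast hsum
end

section
/- Let n ≥ 1 and ε > 0 be sufficiently small. Place n red points at the vertices exp(2πik/n), k = 0, …, n−1, of a regular n-gon inscribed in the unit circle, and n blue points at (1−ε)·exp(2πik/n), k = 0, …, n−1. Then for every three red points a, b, c, the convex hull of {a, b, c} contains at least one blue point in its interior or distinct from a, b, c; in particular this configuration contains no empty red-red-red triangle. -/
/-!
Rotate so that a red vertex of the triangle is `1`, and let `α, β ≤ π` be the arcs from it to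
the other two vertices. The opposite side is the chord from `e^{-iα}` to `e^{iβ}`, which meets
the real axis at `sin (α + β) / (sin α + sin β) = cos u / cos v`, where `u = (α + β) / 2` and
`v = (α - β) / 2`. All three arcs are at least `2π/n`, so `u ≥ |v| + 2π/n`, and then
`cos u / cos v ≤ cos (π/n) < 1 - ε`: the blue point `1 - ε` lies between the chord and `1`.
The vertex opposite the largest arc has both adjacent arcs at most `π`. Finally a blue point
has modulus `|1 - ε| < 1`, so it is never red.
-/

open Complex
open scoped Real

lemma smul_add_smul_add_smul_mem_convexHull {E : Type*} [AddCommGroup E] [Module ℝ E]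
    {x y z : E} {a b c : ℝ} (ha : 0 ≤ a) (hb : 0 ≤ b) (hc : 0 ≤ c) (habc : a + b + c = 1) :
    a • x + b • y + c • z ∈ convexHull ℝ {x, y, z} := by
  have h := (convex_convexHull ℝ {x, y, z}).sum_mem (t := Finset.univ) (w := ![a, b, c])
    (z := ![x, y, z]) ?_ ?_ ?_
  · simpa [Fin.sum_univ_three, add_assoc] using h
  · intro i _; fin_cases i <;> assumption
  · simp [Fin.sum_univ_three, habc]
  · intro i _; fin_cases i <;> apply subset_convexHull <;> simp

lemma exists_lt_lt_eq_of_ne {α : Type*} [LinearOrder α] {a b c : α}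
    (hab : a ≠ b) (hac : a ≠ c) (hbc : b ≠ c) :
    ∃ x y z, x < y ∧ y < z ∧ ({a, b, c} : Set α) = {x, y, z} := by
  classical
  have hcard : ({a, b, c} : Finset α).card = 3 :=
    Finset.card_eq_three.mpr ⟨a, b, c, hab, hac, hbc, rfl⟩
  obtain ⟨f, hf⟩ : ∃ f : Fin 3 ↪o α, Set.range f = {a, b, c} :=
    ⟨_, by rw [Finset.range_orderEmbOfFin _ hcard]; simp⟩
  refine ⟨f 0, f 1, f 2, f.strictMono (by decide), f.strictMono (by decide), ?_⟩
  rw [← hf]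
  ext w
  simp [Fin.exists_fin_succ, eq_comm]

noncomputable def expI (θ : ℝ) : ℂ := exp (θ * I)

lemma expI_add (x y : ℝ) : expI (x + y) = expI x * expI y := by
  simp only [expI, ofReal_add, add_mul, exp_add]

lemma norm_expI (θ : ℝ) : ‖expI θ‖ = 1 := norm_exp_ofReal_mul_I θ

lemma expI_add_two_pi (θ : ℝ) : expI (θ + 2 * π) = expI θ := by
  simp [expI, add_mul, exp_add]

lemma expI_sub_two_pi (θ : ℝ) : expI (θ - 2 * π) = expI θ := by
  rw [← expI_add_two_pi (θ - 2 * π), sub_add_cancel]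

lemma expI_eq_cos_add_sin_mul_I (θ : ℝ) : expI θ = Real.cos θ + Real.sin θ * I := by
  rw [expI, exp_mul_I, ofReal_cos, ofReal_sin]

lemma one_sub_mul_expI_ne_expI {ε : ℝ} (hε : 0 < ε) (hε₂ : ε < 2) (θ ψ : ℝ) :
    (1 - ε) * expI θ ≠ expI ψ := by
  intro h
  have hnorm := congrArg norm h
  rw [norm_mul, norm_expI, norm_expI, mul_one, ← ofReal_one, ← ofReal_sub, norm_real,
    Real.norm_eq_abs, abs_eq zero_le_one] at hnorm
  rcases hnorm with h | h <;> linarith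

lemma cos_lt_one_sub_mul_cos {δ ε u w : ℝ} (hδ : 0 < δ) (hw : 0 ≤ w) (hwπ : w < π / 2)
    (hwu : w + δ ≤ u) (hu : u ≤ π) (hε : ε < 1 - Real.cos (δ / 2)) :
    Real.cos u < (1 - ε) * Real.cos w := by
  have hcos_w : 0 < Real.cos w := Real.cos_pos_of_mem_Ioo ⟨by linarith, hwπ⟩
  have hsin_w : 0 ≤ Real.sin w := Real.sin_nonneg_of_nonneg_of_le_pi hw (by linarith)
  have hsin_δ : 0 ≤ Real.sin δ := Real.sin_nonneg_of_nonneg_of_le_pi hδ.le (by linarith)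
  calc Real.cos u ≤ Real.cos (w + δ) :=
        Real.cos_le_cos_of_nonneg_of_le_pi (by linarith) hu hwu
    _ = Real.cos w * Real.cos δ - Real.sin w * Real.sin δ := Real.cos_add w δ
    _ ≤ Real.cos w * Real.cos (δ / 2) := by
        have : Real.cos δ ≤ Real.cos (δ / 2) :=
          Real.cos_le_cos_of_nonneg_of_le_pi (by linarith) (by linarith) (by linarith)
        nlinarith [mul_nonneg hsin_w hsin_δ]
    _ < (1 - ε) * Real.cos w := by nlinarith

lemma sin_add_lt_one_sub_mul {δ ε α β : ℝ} (hδ : 0 < δ) (hε : ε < 1 - Real.cos (δ / 2))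
    (hα : δ ≤ α) (hβ : δ ≤ β) (hαπ : α ≤ π) (hβπ : β ≤ π) (hαβ : α + β ≤ 2 * π - δ) :
    Real.sin (α + β) < (1 - ε) * (Real.sin α + Real.sin β) := by
  obtain ⟨u, v, rfl, rfl⟩ : ∃ u v, α = u + v ∧ β = u - v :=
    ⟨(α + β) / 2, (α - β) / 2, by ring, by ring⟩
  have hsin_u : 0 < Real.sin u := Real.sin_pos_of_pos_of_lt_pi (by linarith) (by linarith)
  have hcos : Real.cos u < (1 - ε) * Real.cos v := by
    rw [← Real.cos_abs v]
    exact cos_lt_one_sub_mul_cos hδ (abs_nonneg v) (abs_lt.mpr ⟨by linarith, by linarith⟩)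
      (by linarith [abs_le.mpr (show -(u - δ) ≤ v ∧ v ≤ u - δ from ⟨by linarith, by linarith⟩)])
      (by linarith) hε
  calc Real.sin (u + v + (u - v)) = 2 * Real.sin u * Real.cos u := by
        rw [show u + v + (u - v) = 2 * u by ring, Real.sin_two_mul]
    _ < 2 * Real.sin u * ((1 - ε) * Real.cos v) := by gcongr
    _ = (1 - ε) * (Real.sin (u + v) + Real.sin (u - v)) := by
        rw [Real.sin_add, Real.sin_sub]; ring

-- The chord from `expI (-α)` to `expI β` meets the real axis at `sin (α + β) / (sin α + sin β)`.
lemma sin_mul_expI_neg_add_sin_mul_expI (α β : ℝ) :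
    Real.sin β * expI (-α) + Real.sin α * expI β = Real.sin (α + β) := by
  simp only [expI_eq_cos_add_sin_mul_I, Real.cos_neg, Real.sin_neg, Real.sin_add]
  push_cast
  ring

lemma one_sub_mul_expI_mem_convexHull {θ α β ε : ℝ} (hα : 0 ≤ Real.sin α)
    (hβ : 0 ≤ Real.sin β) (hε : 0 ≤ ε)
    (h : Real.sin (α + β) < (1 - ε) * (Real.sin α + Real.sin β)) :
    (1 - ε) * expI θ ∈ convexHull ℝ {expI (θ - α), expI θ, expI (θ + β)} := by
  set S := Real.sin α + Real.sin β
  have hD : 0 < S - Real.sin (α + β) := by nlinarith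
  set t := ε / (S - Real.sin (α + β))
  have ht : 0 ≤ t := div_nonneg hε hD.le
  have htD : t * (S - Real.sin (α + β)) = ε := div_mul_cancel₀ ε hD.ne'
  have htS : t * S ≤ 1 := by
    rw [div_mul_eq_mul_div, div_le_one hD]; nlinarith
  have hcomb : (1 - ε : ℂ) * expI θ = (t * Real.sin β) • expI (θ - α)
      + (1 - t * S) • expI θ + (t * Real.sin α) • expI (θ + β) := by
    have htD' : (t : ℂ) * (S - Real.sin (α + β)) = ε := by exact_mod_cast htD
    simp only [sub_eq_add_neg θ α, expI_add, real_smul, ofReal_mul, ofReal_sub, ofReal_one]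
    linear_combination (-t * expI θ) * sin_mul_expI_neg_add_sin_mul_expI α β + expI θ * htD'
  rw [hcomb]
  exact smul_add_smul_add_smul_mem_convexHull (mul_nonneg ht hβ) (by linarith)
    (mul_nonneg ht hα) (by ring)

lemma one_sub_mul_expI_mem_convexHull_of_arcs_le {δ ε α β γ : ℝ} (θ : ℝ) (hδ : 0 < δ)
    (hε : 0 ≤ ε) (hεδ : ε < 1 - Real.cos (δ / 2)) (hα : δ ≤ α) (hβ : δ ≤ β) (hγ : δ ≤ γ)
    (hsum : α + β + γ = 2 * π) (hαγ : α ≤ γ) (hβγ : β ≤ γ) :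
    (1 - ε) * expI θ ∈ convexHull ℝ {expI (θ - α), expI θ, expI (θ + β)} := by
  have hαπ : α ≤ π := by linarith
  have hβπ : β ≤ π := by linarith
  exact one_sub_mul_expI_mem_convexHull
    (Real.sin_nonneg_of_nonneg_of_le_pi (by linarith) hαπ)
    (Real.sin_nonneg_of_nonneg_of_le_pi (by linarith) hβπ) hε
    (sin_add_lt_one_sub_mul hδ hεδ hα hβ hαπ hβπ (by linarith))

lemma exists_one_sub_mul_expI_mem_convexHull {δ ε θ₁ θ₂ θ₃ : ℝ} (hδ : 0 < δ) (hε : 0 ≤ ε)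
    (hεδ : ε < 1 - Real.cos (δ / 2)) (h₁₂ : δ ≤ θ₂ - θ₁) (h₂₃ : δ ≤ θ₃ - θ₂)
    (h₃₁ : δ ≤ θ₁ + 2 * π - θ₃) :
    ∃ θ ∈ ({θ₁, θ₂, θ₃} : Set ℝ),
      (1 - ε) * expI θ ∈ convexHull ℝ {expI θ₁, expI θ₂, expI θ₃} := by
  have hsum : (θ₂ - θ₁) + (θ₃ - θ₂) + (θ₁ + 2 * π - θ₃) = 2 * π := by ring
  obtain ⟨h₁, h₂⟩ | ⟨h₁, h₂⟩ | ⟨h₁, h₂⟩ :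
      (θ₂ - θ₁ ≤ θ₁ + 2 * π - θ₃ ∧ θ₃ - θ₂ ≤ θ₁ + 2 * π - θ₃) ∨
      (θ₃ - θ₂ ≤ θ₂ - θ₁ ∧ θ₁ + 2 * π - θ₃ ≤ θ₂ - θ₁) ∨
      (θ₁ + 2 * π - θ₃ ≤ θ₃ - θ₂ ∧ θ₂ - θ₁ ≤ θ₃ - θ₂) := by grind
  · have := one_sub_mul_expI_mem_convexHull_of_arcs_le θ₂ hδ hε hεδ h₁₂ h₂₃ h₃₁ hsum h₁ h₂
    rw [sub_sub_cancel, add_sub_cancel] at this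
    exact ⟨θ₂, by simp, this⟩
  · have := one_sub_mul_expI_mem_convexHull_of_arcs_le θ₃ hδ hε hεδ h₂₃ h₃₁ h₁₂
      (by linarith) h₁ h₂
    rw [sub_sub_cancel, show θ₃ + (θ₁ + 2 * π - θ₃) = θ₁ + 2 * π by ring,
      expI_add_two_pi, Set.pair_comm, Set.insert_comm] at this
    exact ⟨θ₃, by simp, this⟩
  · have := one_sub_mul_expI_mem_convexHull_of_arcs_le θ₁ hδ hε hεδ h₃₁ h₁₂ h₂₃
      (by linarith) h₁ h₂
    rw [show θ₁ - (θ₁ + 2 * π - θ₃) = θ₃ - 2 * π by ring, add_sub_cancel,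
      expI_sub_two_pi, Set.insert_comm, Set.pair_comm] at this
    exact ⟨θ₁, by simp, this⟩

lemma exists_one_sub_mul_expI_mem_convexHull_of_lt {n : ℕ} {ε : ℝ} (hε : 0 ≤ ε)
    (hεn : ε < 1 - Real.cos (π / n)) {x y z : Fin n} (hxy : x < y) (hyz : y < z) :
    ∃ k : Fin n, (1 - ε) * expI (2 * π / n * (k : ℕ)) ∈ convexHull ℝ
      {expI (2 * π / n * (x : ℕ)), expI (2 * π / n * (y : ℕ)), expI (2 * π / n * (z : ℕ))} := by
  have hn : (0 : ℝ) < n := Nat.cast_pos.mpr x.pos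
  have hδ : 0 < 2 * π / n := by positivity
  have hgap {p q : ℝ} (hpq : p + 1 ≤ q) : 2 * π / n ≤ 2 * π / n * q - 2 * π / n * p := by
    nlinarith
  have hxy' : ((x : ℕ) : ℝ) + 1 ≤ (y : ℕ) := by exact_mod_cast hxy
  have hyz' : ((y : ℕ) : ℝ) + 1 ≤ (z : ℕ) := by exact_mod_cast hyz
  have hzn : ((z : ℕ) : ℝ) + 1 ≤ (x : ℕ) + n := by
    have := z.isLt; exact_mod_cast (by omega : (z : ℕ) + 1 ≤ x + n)
  obtain ⟨θ, hθ, hmem⟩ := exists_one_sub_mul_expI_mem_convexHull hδ hε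
    (by rwa [show 2 * π / n / 2 = π / n by ring]) (hgap hxy') (hgap hyz')
    (by have := hgap hzn; rwa [mul_add, div_mul_cancel₀ _ hn.ne'] at this)
  rcases hθ with rfl | rfl | rfl
  exacts [⟨x, hmem⟩, ⟨y, hmem⟩, ⟨z, hmem⟩]

theorem stmt_5_general (n : ℕ) (ε : ℝ) (hε0 : 0 < ε)
    (hεs : ε < 1 - Real.cos (Real.pi / n))
    (a b c : Fin n) (hab : a ≠ b) (hac : a ≠ c) (hbc : b ≠ c) :
    ∃ k : Fin n,
      ((1 - ε : ℂ) * Complex.exp (2 * Real.pi * Complex.I * (k : ℕ) / n)) ∈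
        convexHull ℝ ({Complex.exp (2 * Real.pi * Complex.I * (a : ℕ) / n),
          Complex.exp (2 * Real.pi * Complex.I * (b : ℕ) / n),
          Complex.exp (2 * Real.pi * Complex.I * (c : ℕ) / n)} : Set ℂ) ∧
      ∀ v : Fin n,
        (1 - ε : ℂ) * Complex.exp (2 * Real.pi * Complex.I * (k : ℕ) / n) ≠
          Complex.exp (2 * Real.pi * Complex.I * (v : ℕ) / n) := by
  set red : Fin n → ℂ := fun k => expI (2 * π / n * (k : ℕ))
  have hred (k : Fin n) : exp (2 * π * I * (k : ℕ) / n) = red k := by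
    simp only [red, expI]; push_cast; ring_nf
  simp only [hred]
  obtain ⟨x, y, z, hxy, hyz, hxyz⟩ := exists_lt_lt_eq_of_ne hab hac hbc
  have hhull : ({red a, red b, red c} : Set ℂ) = {red x, red y, red z} := by
    simpa only [Set.image_insert_eq, Set.image_singleton] using congrArg (red '' ·) hxyz
  obtain ⟨k, hk⟩ := exists_one_sub_mul_expI_mem_convexHull_of_lt hε0.le hεs hxy hyz
  refine ⟨k, hhull ▸ hk, fun v => one_sub_mul_expI_ne_expI hε0 ?_ _ _⟩
  linarith [Real.neg_one_le_cos (π / n)]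

/-- Place `n` red points at the vertices `exp(2πik/n)` of a regular `n`-gon and `n` blue
points at `(1-ε)·exp(2πik/n)`.  For `ε > 0` sufficiently small (`ε < 1 - cos(π/n)`),
the convex hull of any three red points contains a blue point (which is distinct from the
three red vertices); in particular there is no empty red-red-red triangle. -/
theorem stmt_5 (n : ℕ) (hn : 1 ≤ n) (ε : ℝ) (hε0 : 0 < ε)
    (hεs : ε < 1 - Real.cos (Real.pi / n))
    (a b c : Fin n) (hab : a ≠ b) (hac : a ≠ c) (hbc : b ≠ c) :
    ∃ k : Fin n,
      ((1 - ε : ℂ) * Complex.exp (2 * Real.pi * Complex.I * (k : ℕ) / n)) ∈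
        convexHull ℝ ({Complex.exp (2 * Real.pi * Complex.I * (a : ℕ) / n),
          Complex.exp (2 * Real.pi * Complex.I * (b : ℕ) / n),
          Complex.exp (2 * Real.pi * Complex.I * (c : ℕ) / n)} : Set ℂ) ∧
      ∀ v : Fin n,
        (1 - ε : ℂ) * Complex.exp (2 * Real.pi * Complex.I * (k : ℕ) / n) ≠
          Complex.exp (2 * Real.pi * Complex.I * (v : ℕ) / n) :=
  stmt_5_general n ε hε0 hεs a b c hab hac hbc
end
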